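/- arXiv:2507.12271 — 2 statements merged into one kernel-verified Lean document; each statement's English description precedes it below -/
import Mathlib

section
/- Let v ∈ V be a generator and w ∈ W_Γ an element with vw = wv and v ≤_R w. Then for every u ∈ W_Γ one has w ≤_R v·u if and only if (vw ≤_R u and not w ≤_R u); equivalently, left translation by v maps the set {u ∈ W_Γ : w ≤_R u} bijectively onto {u ∈ W_Γ : vw ≤_R u} \ {u ∈ W_Γ : w ≤_R u}. -/
/-!
Put `x = v w`, so that `w = v x`, `ℓ w = ℓ x + 1`, and `x` commutes with `v`. Then
`w⁻¹ (v u) = x⁻¹ u` and `w⁻¹ u = v x⁻¹ u`, and everything reduces to length bookkeeping except one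
fact: if `v` is a left descent of `u`, then it is a left descent of `x⁻¹ u`.

For this, in a right-angled Coxeter group every left descent `s` of `π ω` occurs in the left
inversion sequence of the word `ω`; this strong-exchange property comes from the action of `W` on
`W × Bool` in which `s` conjugates the first coordinate and flips the second one at `s`. Writing
`u = x · (x⁻¹ u)` as a concatenation of reduced words, `v` cannot come from the word for `x`
(it is not a descent of `x`), and conjugation by `x` fixes `v`, so `v` lies in the left inversion
sequence of the reduced word for `x⁻¹ u`.
-/

open CoxeterSystem
open scoped Classical

/-- The right-angled Coxeter matrix associated with a simple graph `Γ`: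
`M v v = 1`, `M v v' = 2` if `v, v'` are adjacent, and `M v v' = 0` (representing `∞`)
otherwise. -/
noncomputable def SimpleGraph.racMatrix {V : Type*} (Γ : SimpleGraph V) : CoxeterMatrix V where
  M := Matrix.of fun v w => if v = w then 1 else if Γ.Adj v w then 2 else 0
  isSymm := by
    classical
    ext i j
    by_cases h : i = j
    · simp [Matrix.transpose_apply, h]
    · simp only [Matrix.transpose_apply, Matrix.of_apply, if_neg h, if_neg (Ne.symm h)]
      rw [Γ.adj_comm]
  diagonal i := by simp
  off_diagonal i i' h := by
    simp only [Matrix.of_apply, if_neg h]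
    split <;> simp

/-- The right-angled Coxeter group `W_Γ` of a simple graph `Γ`. -/
abbrev SimpleGraph.racGroup {V : Type*} (Γ : SimpleGraph V) : Type _ := Γ.racMatrix.Group

/-- The canonical Coxeter system on `W_Γ`. -/
noncomputable def SimpleGraph.racCS {V : Type*} (Γ : SimpleGraph V) :
    CoxeterSystem Γ.racMatrix Γ.racGroup := Γ.racMatrix.toCoxeterSystem

/-- The weak right Bruhat order on `W_Γ`: `u ≤_R w` iff `ℓ(w) = ℓ(u) + ℓ(u⁻¹w)`. -/
def SimpleGraph.leR {V : Type*} (Γ : SimpleGraph V) (u w : Γ.racGroup) : Prop :=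
  Γ.racCS.length w = Γ.racCS.length u + Γ.racCS.length (u⁻¹ * w)

/-- A closed walk in the simple graph `G`: a nonempty sequence of vertices in which consecutive
vertices are adjacent and additionally the first and the last vertex are adjacent. -/
def SimpleGraph.IsClosedWalkList {V : Type*} (G : SimpleGraph V) (l : List V) : Prop :=
  l ≠ [] ∧ l.Chain' G.Adj ∧ ∀ h : l ≠ [], G.Adj (l.head h) (l.getLast h)

namespace CoxeterSystem

variable {B W : Type*} [Group W] {M : CoxeterMatrix B} (cs : CoxeterSystem M W)

local prefix:100 "s " => cs.simple
local prefix:100 "π " => cs.wordProd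
local prefix:100 "ℓ " => cs.length
local prefix:100 "lis " => cs.leftInvSeq

/-- Since `M i j = 0` encodes `m(i, j) = ∞`, this says that every `m(i, j)` with `i ≠ j` is `2`
or `∞`. -/
def _root_.CoxeterMatrix.IsRightAngled (M : CoxeterMatrix B) : Prop := ∀ i j, M i j ≤ 2

def RightWeakLE (u w : W) : Prop := ℓ w = ℓ u + ℓ (u⁻¹ * w)

theorem RightWeakLE.trans {u v w : W} (huv : cs.RightWeakLE u v) (hvw : cs.RightWeakLE v w) :
    cs.RightWeakLE u w := by
  have h₁ : ℓ (u⁻¹ * w) ≤ ℓ (u⁻¹ * v) + ℓ (v⁻¹ * w) := by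
    simpa [mul_assoc] using cs.length_mul_le (u⁻¹ * v) (v⁻¹ * w)
  have h₂ : ℓ w ≤ ℓ u + ℓ (u⁻¹ * w) := by simpa using cs.length_mul_le u (u⁻¹ * w)
  unfold RightWeakLE at *
  omega

theorem rightWeakLE_simple_iff {i : B} {w : W} :
    cs.RightWeakLE (s i) w ↔ cs.IsLeftDescent w i := by
  rw [RightWeakLE, IsLeftDescent, length_simple, inv_simple]
  rcases cs.length_simple_mul w i with h | h <;> omega

theorem leftInvSeq_append (α β : List B) :
    lis (α ++ β) = lis α ++ (lis β).map (MulAut.conj (π α)) := by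
  induction α with
  | nil => simp
  | cons i α ih =>
    simp only [List.cons_append, leftInvSeq, ih, List.map_append, List.map_map, wordProd_cons,
      map_mul]
    rfl

theorem simple_mul_mul_simple_eq_iff {i : B} {g t : W} (hg : Commute (s i) g) :
    s i * t * s i = g ↔ t = g := by
  constructor
  · intro h
    have : s i * t = s i * g := by
      rw [hg.eq, ← h, simple_mul_simple_cancel_right]
    exact mul_left_cancel this
  · rintro rfl
    rw [hg.eq, simple_mul_simple_cancel_right]

theorem commute_simple_of_eq_two {i j : B} (h : M i j = 2) : Commute (s i) (s j) := by
  have := cs.simple_mul_simple_pow i j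
  rw [h, pow_two, mul_eq_one_iff_eq_inv, mul_inv_rev, inv_simple, inv_simple] at this
  exact this

noncomputable def conjFlip (i : B) : Equiv.Perm (W × Bool) :=
  Function.Involutive.toPerm (fun p => (s i * p.1 * s i, xor p.2 (decide (p.1 = s i)))) <| by
    rintro ⟨t, ε⟩
    simp only [simple_mul_mul_simple_eq_iff cs (Commute.refl (s i)), Bool.xor_assoc,
      Bool.xor_self, Bool.xor_false, Prod.mk.injEq, and_true]
    simp only [mul_assoc, simple_mul_simple_cancel_left]
    rw [← mul_assoc, simple_mul_simple_cancel_right]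

theorem conjFlip_apply (i : B) (t : W) (ε : Bool) :
    cs.conjFlip i (t, ε) = (s i * t * s i, xor ε (decide (t = s i))) := rfl

theorem conjFlip_mul_self (i : B) : cs.conjFlip i * cs.conjFlip i = 1 :=
  Equiv.ext (Function.Involutive.toPerm_involutive _)

theorem conjFlip_commute {i j : B} (h : Commute (s i) (s j)) :
    Commute (cs.conjFlip i) (cs.conjFlip j) := by
  ext ⟨t, ε⟩ : 1
  simp only [Equiv.Perm.mul_apply, conjFlip_apply, simple_mul_mul_simple_eq_iff cs h,
    simple_mul_mul_simple_eq_iff cs h.symm, Prod.mk.injEq]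
  constructor
  · simp only [← mul_assoc, h.eq]
    simp only [mul_assoc, h.eq]
  · cases decide (t = s i) <;> cases decide (t = s j) <;> simp

theorem isLiftable_conjFlip (hM : M.IsRightAngled) : M.IsLiftable cs.conjFlip := by
  intro i j
  rcases eq_or_ne i j with rfl | hij
  · rw [M.diagonal, pow_one, conjFlip_mul_self]
  · obtain h | h : M i j = 0 ∨ M i j = 2 := by
      have := hM i j; have := M.off_diagonal i j hij; omega
    · rw [h, pow_zero]
    · rw [h, (cs.conjFlip_commute (cs.commute_simple_of_eq_two h)).mul_pow, pow_two, pow_two,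
        conjFlip_mul_self, conjFlip_mul_self, one_mul]

noncomputable def conjFlipHom (hM : M.IsRightAngled) : W →* Equiv.Perm (W × Bool) :=
  cs.lift ⟨cs.conjFlip, cs.isLiftable_conjFlip hM⟩

theorem conjFlipHom_simple (hM : M.IsRightAngled) (i : B) :
    cs.conjFlipHom hM (s i) = cs.conjFlip i :=
  cs.lift_apply_simple (cs.isLiftable_conjFlip hM) i

theorem conjFlipHom_wordProd_inv_of_not_mem (hM : M.IsRightAngled) (ω : List B) {t : W}
    (ht : t ∉ lis ω) (ε : Bool) :
    cs.conjFlipHom hM (π ω)⁻¹ (t, ε) = ((π ω)⁻¹ * t * π ω, ε) := by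
  induction ω generalizing t with
  | nil => simp
  | cons i ω ih =>
    simp only [leftInvSeq, List.mem_cons, List.mem_map, not_or, not_exists, not_and] at ht
    have ht' : s i * t * s i ∉ lis ω := fun h => ht.2 _ h (by simp [mul_assoc])
    rw [wordProd_cons, mul_inv_rev, inv_simple, map_mul, Equiv.Perm.mul_apply,
      conjFlipHom_simple, conjFlip_apply, decide_eq_false ht.1, Bool.xor_false, ih ht']
    simp [mul_assoc]

theorem simple_mem_leftInvSeq_of_isLeftDescent (hM : M.IsRightAngled) {ω : List B} {i : B}
    (hi : cs.IsLeftDescent (π ω) i) : s i ∈ lis ω := by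
  by_contra hmem
  obtain ⟨υ, hυ, hπ⟩ := cs.exists_isReduced (s i * π ω)
  have hmem' : s i ∉ lis υ := fun h => by
    have := (cs.isLeftInversion_of_mem_leftInvSeq hυ h).2
    rw [← hπ, simple_mul_simple_cancel_left] at this
    exact lt_asymm hi this
  have hflip : cs.conjFlipHom hM (π ω)⁻¹ (s i, false) = ((π υ)⁻¹ * s i * π υ, true) := by
    rw [← cs.conjFlipHom_wordProd_inv_of_not_mem hM υ hmem', ← hπ, mul_inv_rev, inv_simple,
      map_mul, Equiv.Perm.mul_apply, conjFlipHom_simple, conjFlip_apply]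
    simp
  rw [cs.conjFlipHom_wordProd_inv_of_not_mem hM ω hmem] at hflip
  exact Bool.false_ne_true (congrArg Prod.snd hflip)

theorem isLeftDescent_inv_mul_of_commute (hM : M.IsRightAngled) {i : B} {x u : W}
    (hx : Commute (s i) x) (hxi : ¬ cs.IsLeftDescent x i) (hu : cs.IsLeftDescent u i) :
    cs.IsLeftDescent (x⁻¹ * u) i := by
  obtain ⟨α, hα, rfl⟩ := cs.exists_isReduced x
  obtain ⟨β, hβ, hβu⟩ := cs.exists_isReduced ((π α)⁻¹ * u)
  have hu' : u = π (α ++ β) := by rw [wordProd_append, ← hβu, mul_inv_cancel_left]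
  have hmem := cs.simple_mem_leftInvSeq_of_isLeftDescent hM (hu' ▸ hu)
  rw [leftInvSeq_append, List.mem_append, List.mem_map] at hmem
  rcases hmem with hmem | ⟨t, ht, hconj⟩
  · exact absurd (cs.isLeftInversion_of_mem_leftInvSeq hα hmem).2 hxi
  · have hts : t = s i := by
      rwa [MulAut.conj_apply, mul_inv_eq_iff_eq_mul, hx.eq, mul_right_inj] at hconj
    rw [hβu]
    exact (cs.isLeftInversion_of_mem_leftInvSeq hβ (hts ▸ ht)).2

theorem rightWeakLE_simple_mul_iff (hM : M.IsRightAngled) {i : B} {w : W}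
    (hcomm : Commute (s i) w) (hle : cs.RightWeakLE (s i) w) (u : W) :
    cs.RightWeakLE w (s i * u) ↔ cs.RightWeakLE (s i * w) u ∧ ¬ cs.RightWeakLE w u := by
  have hdesc : cs.RightWeakLE w u → cs.IsLeftDescent u i := fun hwu =>
    cs.rightWeakLE_simple_iff.mp (RightWeakLE.trans cs hle hwu)
  rw [rightWeakLE_simple_iff] at hle
  obtain ⟨x, rfl⟩ : ∃ x, w = s i * x := ⟨s i * w, (simple_mul_simple_cancel_left cs i).symm⟩
  rw [IsLeftDescent, simple_mul_simple_cancel_left] at hle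
  rw [simple_mul_simple_cancel_left]
  have hx : Commute (s i) x := by
    simpa only [simple_mul_simple_cancel_left] using (Commute.refl (s i)).mul_right hcomm
  have hkey : cs.IsLeftDescent u i → cs.IsLeftDescent (x⁻¹ * u) i :=
    cs.isLeftDescent_inv_mul_of_commute hM hx (by rw [IsLeftDescent]; omega)
  have e₁ : (s i * x)⁻¹ * (s i * u) = x⁻¹ * u := by
    rw [mul_inv_rev, inv_simple, mul_assoc, simple_mul_simple_cancel_left]
  have e₂ : (s i * x)⁻¹ * u = s i * (x⁻¹ * u) := by
    rw [mul_inv_rev, inv_simple, ← mul_assoc, hx.inv_right.eq]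
  have hu : ℓ u ≤ ℓ x + ℓ (x⁻¹ * u) := by simpa using cs.length_mul_le x (x⁻¹ * u)
  have hsx := cs.length_simple_mul x i
  have hsu := cs.length_simple_mul u i
  have hsy := cs.length_simple_mul (x⁻¹ * u) i
  simp only [RightWeakLE, IsLeftDescent, e₁, e₂] at hdesc hkey ⊢
  constructor
  · intro h
    exact ⟨by omega, fun hwu => by have := hdesc hwu; omega⟩
  · rintro ⟨h, hwu⟩
    by_cases hd : ℓ (s i * u) < ℓ u
    · have := hkey hd
      omega
    · omega

end CoxeterSystem

theorem SimpleGraph.racMatrix_isRightAngled {V : Type*} (Γ : SimpleGraph V) :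
    Γ.racMatrix.IsRightAngled := by
  intro i j
  simp only [racMatrix, Matrix.of_apply]
  split_ifs <;> omega

theorem statement2_general {V : Type*} (Γ : SimpleGraph V) (v : V) (w : Γ.racGroup)
    (hcomm : Γ.racCS.simple v * w = w * Γ.racCS.simple v)
    (hle : Γ.leR (Γ.racCS.simple v) w) :
    (∀ u : Γ.racGroup,
      Γ.leR w (Γ.racCS.simple v * u) ↔
        (Γ.leR (Γ.racCS.simple v * w) u ∧ ¬ Γ.leR w u)) ∧
    Set.BijOn (fun u : Γ.racGroup => Γ.racCS.simple v * u)
      {u | Γ.leR w u} ({u | Γ.leR (Γ.racCS.simple v * w) u} \ {u | Γ.leR w u}) := by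
  have key := Γ.racCS.rightWeakLE_simple_mul_iff Γ.racMatrix_isRightAngled hcomm hle
  have cancel (u : Γ.racGroup) := Γ.racCS.simple_mul_simple_cancel_left (w := u) v
  refine ⟨key, Set.InvOn.bijOn ⟨fun u _ => cancel u, fun u _ => cancel u⟩ ?_ ?_⟩
  · exact fun u hu => (key _).mp ((cancel u).symm ▸ hu)
  · exact fun u hu => (key u).mpr hu

/-- If `v` is a generator and `w ∈ W_Γ` commutes with `v` and `v ≤_R w`, then
for every `u ∈ W_Γ` one has `w ≤_R v u ↔ (v w ≤_R u ∧ ¬ w ≤_R u)`; equivalently, left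
translation by `v` maps `{u : w ≤_R u}` bijectively onto `{u : v w ≤_R u} \ {u : w ≤_R u}`. -/
theorem statement2 {V : Type*} [Fintype V] (Γ : SimpleGraph V) (v : V) (w : Γ.racGroup)
    (hcomm : Γ.racCS.simple v * w = w * Γ.racCS.simple v)
    (hle : Γ.leR (Γ.racCS.simple v) w) :
    (∀ u : Γ.racGroup,
      Γ.leR w (Γ.racCS.simple v * u) ↔
        (Γ.leR (Γ.racCS.simple v * w) u ∧ ¬ Γ.leR w u)) ∧
    Set.BijOn (fun u : Γ.racGroup => Γ.racCS.simple v * u)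
      {u | Γ.leR w u} ({u | Γ.leR (Γ.racCS.simple v * w) u} \ {u | Γ.leR w u}) :=
  statement2_general Γ v w hcomm hle
end

section
/- Let (t_1,…,t_n) be a closed walk in the complement Γᶜ, let g := t_1⋯t_n ∈ W_Γ, and let x ∈ W_Γ be an element ending in t_n, i.e. ℓ(x·t_n) = ℓ(x) − 1. Then for every L ∈ ℕ one has ℓ(x·g^L) = ℓ(x) + nL. -/
open CoxeterSystem
open scoped Classical

/-! Crossing an edge of `Γᶜ` never cancels: if `x` ends in `d`, and `e` is distinct from and not
adjacent to `d`, then `x` cannot also end in `e`, so `ℓ(x s_e) = ℓ(x) + 1` and `x s_e` ends in `e`.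
Following the closed walk `L` times, starting from its last letter (which is adjacent in `Γᶜ` to
the first one), every letter therefore adds one to the length.

Two non-adjacent generators `a`, `b` cannot both be right descents of `w`: by the exchange
condition `w` would have reduced words ending in arbitrarily long alternating words in `a`, `b`.
The exchange condition comes from Tits' representation of `W` on signed reflections, and
alternating words are reduced because they map to words of the same length in the infinite
dihedral group. -/

namespace DihedralGroup

/-- Word length in the infinite dihedral group with respect to the generators `sr 0`, `sr 1`
(recall `ZMod 0 = ℤ`). -/
def wordLength : DihedralGroup 0 → ℕ
  | r i => (2 * i).natAbs
  | sr i => (2 * i - 1).natAbs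

theorem wordLength_sr_mul_le {k : ZMod 0} (hk : k = 0 ∨ k = 1) (g : DihedralGroup 0) :
    wordLength (sr k * g) ≤ wordLength g + 1 := by
  rcases g with i | i <;>
    simp only [sr_mul_r, sr_mul_sr, wordLength] <;> rcases hk with rfl | rfl <;> omega

end DihedralGroup

namespace SimpleGraph

variable {V : Type*} {Γ : SimpleGraph V}

theorem racMatrix_apply (v u : V) :
    Γ.racMatrix v u = if v = u then 1 else if Γ.Adj v u then 2 else 0 := rfl

theorem isLiftable_racMatrix {G : Type*} [Group G] {f : V → G} (hsq : ∀ v, f v * f v = 1)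
    (hcomm : ∀ v u, Γ.Adj v u → Commute (f v) (f u)) : Γ.racMatrix.IsLiftable f := by
  intro v u
  rw [racMatrix_apply]
  split_ifs with heq hadj
  · rw [heq, pow_one, hsq]
  · rw [(hcomm v u hadj).mul_pow, sq, sq, hsq, hsq, one_mul]
  · exact pow_zero _

variable {W : Type*} [Group W] (cs : CoxeterSystem Γ.racMatrix W)

local prefix:100 "s " => cs.simple
local prefix:100 "π " => cs.wordProd
local prefix:100 "ℓ " => cs.length

theorem commute_simple_of_adj {v u : V} (h : Γ.Adj v u) : Commute (s v) (s u) := by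
  have hsq : (s v * s u) ^ 2 = 1 := by
    simpa [racMatrix_apply, h.ne, h] using cs.simple_mul_simple_pow v u
  rw [Commute, SemiconjBy, ← mul_inv_eq_one, mul_inv_rev, cs.inv_simple, cs.inv_simple]
  simpa [sq, mul_assoc] using hsq

theorem simple_mul_mul_simple_eq_iff (v : V) (t x : W) :
    s v * t * s v = x ↔ t = s v * x * s v := by
  constructor <;> rintro rfl <;> simp [← mul_assoc, cs.simple_mul_simple_self]

/-- The generators of the Tits representation of `W` on signed reflections. -/
noncomputable def reflectionPerm (v : V) : Equiv.Perm (W × ZMod 2) :=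
  Function.Involutive.toPerm (fun p => (s v * p.1 * s v, p.2 + if p.1 = s v then 1 else 0)) <| by
    rintro ⟨t, ε⟩
    refine Prod.ext ?_ ?_
    · simp [mul_assoc, cs.simple_mul_simple_cancel_left, cs.simple_mul_simple_self]
    · simp only [simple_mul_mul_simple_eq_iff cs v t, cs.simple_mul_simple_self,
        one_mul, add_assoc, CharTwo.add_self_eq_zero, add_zero]

theorem reflectionPerm_apply (v : V) (t : W) (ε : ZMod 2) :
    reflectionPerm cs v (t, ε) = (s v * t * s v, ε + if t = s v then 1 else 0) := rfl

theorem commute_reflectionPerm_of_adj {v u : V} (h : Γ.Adj v u) :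
    Commute (reflectionPerm cs v) (reflectionPerm cs u) := by
  have hvu := commute_simple_of_adj cs h
  have hconj : ∀ {x y : V}, Commute (s x) (s y) → s x * s y * s x = s y := fun hxy => by
    rw [hxy.eq, cs.simple_mul_simple_cancel_right]
  refine Equiv.ext fun ⟨t, ε⟩ => Prod.ext ?_ ?_
  · show s v * (s u * t * s u) * s v = s u * (s v * t * s v) * s u
    rw [show s v * (s u * t * s u) * s v = (s v * s u) * t * (s u * s v) by group,
      show s u * (s v * t * s v) * s u = (s u * s v) * t * (s v * s u) by group, hvu.eq]
  · simp only [Equiv.Perm.mul_apply, reflectionPerm_apply,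
      simple_mul_mul_simple_eq_iff cs _ _ (s _), hconj hvu, hconj hvu.symm]
    exact add_right_comm _ _ _

noncomputable def reflectionRep : W →* Equiv.Perm (W × ZMod 2) :=
  cs.lift ⟨reflectionPerm cs, isLiftable_racMatrix
    (fun _ => Equiv.ext (Function.Involutive.toPerm_involutive _))
    (fun _ _ h => commute_reflectionPerm_of_adj cs h)⟩

theorem reflectionRep_simple (v : V) : reflectionRep cs (s v) = reflectionPerm cs v :=
  cs.lift_apply_simple _ v

/-- `inversionParity (π ω) t` is the parity of the number of occurrences of `t` in
`cs.rightInvSeq ω`; the Tits representation shows that it depends only on `π ω`. -/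
noncomputable def inversionParity (w t : W) : ZMod 2 := (reflectionRep cs w (t, 0)).2

theorem reflectionRep_apply (w t : W) (ε : ZMod 2) :
    reflectionRep cs w (t, ε) = (w * t * w⁻¹, ε + inversionParity cs w t) := by
  induction w using cs.simple_induction_left generalizing t ε with
  | one => simp [inversionParity]
  | mul_simple_left v w ih =>
    rw [inversionParity, map_mul, Equiv.Perm.mul_apply, Equiv.Perm.mul_apply, ih, ih,
      reflectionRep_simple, reflectionPerm_apply, reflectionPerm_apply, mul_inv_rev, cs.inv_simple]
    exact Prod.ext (by group) (by ring)

theorem inversionParity_mul (u v t : W) :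
    inversionParity cs (u * v) t = inversionParity cs v t + inversionParity cs u (v * t * v⁻¹) := by
  rw [inversionParity, map_mul, Equiv.Perm.mul_apply, reflectionRep_apply cs v,
    reflectionRep_apply cs u, zero_add]

theorem inversionParity_simple (v : V) (t : W) :
    inversionParity cs (s v) t = if t = s v then 1 else 0 := by
  simp [inversionParity, reflectionRep_simple, reflectionPerm_apply]

theorem inversionParity_one (t : W) : inversionParity cs 1 t = 0 := by
  simp [inversionParity]

theorem inversionParity_self {t : W} (ht : cs.IsReflection t) : inversionParity cs t t = 1 := by
  obtain ⟨u, v, rfl⟩ := ht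
  have h1 := inversionParity_mul cs (u * s v) u⁻¹ (u * s v * u⁻¹)
  have h2 := inversionParity_mul cs u (s v) (s v)
  have h3 := inversionParity_mul cs u u⁻¹ (u * s v * u⁻¹)
  have hconj : u⁻¹ * (u * s v * u⁻¹) * u = s v := by group
  simp only [hconj, inv_inv, mul_inv_cancel_right, mul_inv_cancel, inversionParity_one,
    inversionParity_simple, if_pos] at h1 h2 h3
  linear_combination h1 + h2 - h3

theorem mem_rightInvSeq_of_inversionParity_eq_one {ω : List V} {t : W}
    (h : inversionParity cs (π ω) t = 1) : t ∈ cs.rightInvSeq ω := by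
  induction ω with
  | nil => simp [inversionParity_one] at h
  | cons v ω ih =>
    rw [wordProd_cons, inversionParity_mul, inversionParity_simple] at h
    rw [rightInvSeq, List.mem_cons]
    by_cases hc : π ω * t * (π ω)⁻¹ = s v
    · left
      rw [← hc]
      group
    · right
      rw [if_neg hc, add_zero] at h
      exact ih h

theorem inversionParity_eq_one_of_isRightInversion {w t : W} (h : cs.IsRightInversion w t) :
    inversionParity cs w t = 1 := by
  refine ((by decide : ∀ x : ZMod 2, x = 0 ∨ x = 1) _).resolve_left fun h0 => ?_
  obtain ⟨ω, hω, hwt⟩ := cs.exists_isReduced (w * t)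
  have hmem : t ∈ cs.rightInvSeq ω := mem_rightInvSeq_of_inversionParity_eq_one cs <| by
    rw [← hwt, inversionParity_mul, inversionParity_self cs h.1, mul_inv_cancel_right, h0,
      add_zero]
  have hlt := (cs.isRightInversion_of_mem_rightInvSeq hω hmem).2
  rw [← hwt, mul_assoc, h.1.mul_self, mul_one] at hlt
  exact absurd h.2 (lt_asymm hlt)

theorem exists_eraseIdx_of_isRightDescent {ω : List V} {v : V} (h : cs.IsRightDescent (π ω) v) :
    ∃ j < ω.length, π ω * s v = π (ω.eraseIdx j) := by
  have hmem := mem_rightInvSeq_of_inversionParity_eq_one cs <|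
    inversionParity_eq_one_of_isRightInversion cs ⟨cs.isReflection_simple v, h⟩
  obtain ⟨j, hj, hjv⟩ := List.mem_iff_getElem.mp hmem
  refine ⟨j, by simpa using hj, ?_⟩
  rw [← hjv, ← List.getD_eq_getElem _ 1 hj, cs.wordProd_mul_getD_rightInvSeq]

section Dihedral

open DihedralGroup

variable {a b : V}

theorem isLiftable_dihedral (hadj : ¬Γ.Adj a b) :
    Γ.racMatrix.IsLiftable fun v =>
      if v = a then sr 0 else if v = b then sr (1 : ZMod 0) else 1 := by
  refine isLiftable_racMatrix (fun v => by split_ifs <;> simp [sr_mul_sr]) fun v u hvu => ?_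
  split_ifs <;> subst_vars <;> simp_all [Commute.one_left, Commute.one_right, hvu.symm]

noncomputable def toDihedral (hadj : ¬Γ.Adj a b) : W →* DihedralGroup 0 :=
  cs.lift ⟨_, isLiftable_dihedral hadj⟩

theorem toDihedral_simple (hadj : ¬Γ.Adj a b) (v : V) :
    toDihedral cs hadj (s v) = if v = a then sr 0 else if v = b then sr 1 else 1 :=
  cs.lift_apply_simple _ v

theorem wordLength_toDihedral_le (hadj : ¬Γ.Adj a b) (w : W) :
    wordLength (toDihedral cs hadj w) ≤ ℓ w := by
  obtain ⟨ω, hω, rfl⟩ := cs.exists_isReduced w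
  rw [hω.eq]
  clear hω
  induction ω with
  | nil =>
    rw [wordProd_nil, map_one]
    exact le_rfl
  | cons v ω ih =>
    rw [wordProd_cons, map_mul, toDihedral_simple, List.length_cons]
    split_ifs
    · exact (wordLength_sr_mul_le (.inl rfl) _).trans (by omega)
    · exact (wordLength_sr_mul_le (.inr rfl) _).trans (by omega)
    · rw [one_mul]
      omega

theorem isReduced_alternatingWord (hab : a ≠ b) (hadj : ¬Γ.Adj a b) (m : ℕ) :
    cs.IsReduced (alternatingWord a b m) := by
  refine le_antisymm (cs.length_wordProd_le _) ?_
  calc (alternatingWord a b m).length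
      = wordLength (toDihedral cs hadj (π (alternatingWord a b m))) := ?_
    _ ≤ _ := wordLength_toDihedral_le cs hadj _
  rw [prod_alternatingWord_eq_mul_pow, map_mul, map_pow, map_mul, toDihedral_simple,
    toDihedral_simple, if_pos rfl, if_neg hab.symm, if_pos rfl, sr_mul_sr, sub_zero, r_one_pow,
    length_alternatingWord]
  split_ifs with hm
  · rw [map_one, one_mul]
    change m = (2 * ((m / 2 : ℕ) : ℤ)).natAbs
    rw [Nat.even_iff] at hm
    omega
  · rw [toDihedral_simple, if_neg hab.symm, if_pos rfl, sr_mul_r]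
    change m = (2 * (1 + ((m / 2 : ℕ) : ℤ)) - 1).natAbs
    rw [Nat.not_even_iff] at hm
    omega

end Dihedral

theorem exists_isReduced_append_alternatingWord {a b : V} (hab : a ≠ b) (hadj : ¬Γ.Adj a b)
    {w : W} (ha : cs.IsRightDescent w a) (hb : cs.IsRightDescent w b) (k : ℕ) :
    ∃ ω, cs.IsReduced (ω ++ alternatingWord a b k) ∧ w = π (ω ++ alternatingWord a b k) := by
  induction k generalizing a b with
  | zero => simpa [alternatingWord] using cs.exists_isReduced w
  | succ k ih =>
    obtain ⟨ω, hω, rfl⟩ := ih hab.symm (fun h => hadj h.symm) hb ha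
    obtain ⟨j, -, hjb⟩ := exists_eraseIdx_of_isRightDescent cs hb
    rcases lt_or_ge j ω.length with hjω | hjω
    · have hw : π (ω ++ alternatingWord b a k) =
          π (ω.eraseIdx j ++ alternatingWord a b (k + 1)) := by
        rw [alternatingWord_succ, List.concat_eq_append, ← List.append_assoc,
          cs.wordProd_append _ [b], ← List.eraseIdx_append_of_lt_length hjω, ← hjb,
          wordProd_singleton, cs.simple_mul_simple_cancel_right]
      refine ⟨ω.eraseIdx j, ?_, hw⟩
      rw [CoxeterSystem.IsReduced, ← hw, hω.eq, List.length_append, List.length_append,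
        List.length_eraseIdx_of_lt hjω, length_alternatingWord, length_alternatingWord]
      omega
    -- the erased letter lies in the alternating suffix, which therefore is not reduced
    · rw [List.eraseIdx_append_of_length_le hjω, wordProd_append, wordProd_append, mul_assoc,
        mul_right_inj] at hjb
      have hred := isReduced_alternatingWord cs hab hadj (k + 1)
      rw [CoxeterSystem.IsReduced, alternatingWord_succ, List.concat_eq_append, wordProd_append,
        wordProd_singleton, hjb, List.length_append, length_alternatingWord] at hred
      have := (cs.length_wordProd_le _).trans
        ((alternatingWord b a k).length_eraseIdx_le (j - ω.length))
      rw [hred, length_alternatingWord, List.length_singleton] at this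
      omega

theorem not_isRightDescent_of_not_adj {a b : V} (hab : a ≠ b) (hadj : ¬Γ.Adj a b) {w : W}
    (ha : cs.IsRightDescent w a) : ¬cs.IsRightDescent w b := fun hb => by
  obtain ⟨ω, hω, hw⟩ := exists_isReduced_append_alternatingWord cs hab hadj ha hb (ℓ w + 1)
  have := hω.eq
  rw [← hw, List.length_append, length_alternatingWord] at this
  omega

theorem length_mul_wordProd_of_isChain {l : List V} {x : W} {d : V}
    (hchain : (d :: l).IsChain Γᶜ.Adj) (hx : cs.IsRightDescent x d) :
    ℓ (x * π l) = ℓ x + l.length ∧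
      cs.IsRightDescent (x * π l) ((d :: l).getLast (List.cons_ne_nil d l)) := by
  induction l generalizing x d with
  | nil => simpa using hx
  | cons e l ih =>
    obtain ⟨hde, hchain⟩ := List.isChain_cons_cons.mp hchain
    obtain ⟨hne, hnadj⟩ := (Γ.compl_adj d e).mp hde
    have hxe : ¬cs.IsRightDescent x e := not_isRightDescent_of_not_adj cs hne hnadj hx
    have hxe' : cs.IsRightDescent (x * s e) e := by
      rwa [cs.isRightDescent_iff_not_isRightDescent_mul, cs.simple_mul_simple_cancel_right]
    obtain ⟨hlen, hdesc⟩ := ih hchain hxe'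
    rw [wordProd_cons, ← mul_assoc, List.getLast_cons (List.cons_ne_nil e l), List.length_cons,
      hlen, cs.not_isRightDescent_iff.mp hxe]
    exact ⟨by omega, hdesc⟩

theorem length_mul_wordProd_pow_of_isChain {t : List V} (ht : t ≠ [])
    (hchain : (t.getLast ht :: t).IsChain Γᶜ.Adj) {x : W} (hx : cs.IsRightDescent x (t.getLast ht))
    (L : ℕ) :
    ℓ (x * π t ^ L) = ℓ x + t.length * L ∧ cs.IsRightDescent (x * π t ^ L) (t.getLast ht) := by
  induction L with
  | zero => simpa using hx
  | succ L ih =>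
    obtain ⟨hlen, hdesc⟩ := length_mul_wordProd_of_isChain cs hchain ih.2
    rw [List.getLast_cons ht] at hdesc
    rw [pow_succ, ← mul_assoc, hlen, ih.1]
    exact ⟨by ring, hdesc⟩

theorem IsClosedWalkList.isChain_getLast_cons {G : SimpleGraph V} {l : List V}
    (h : G.IsClosedWalkList l) : (l.getLast h.1 :: l).IsChain G.Adj := by
  refine List.isChain_cons.mpr ⟨fun y hy => ?_, h.2.1⟩
  rw [List.head?_eq_some_head h.1, Option.mem_some_iff] at hy
  exact hy ▸ (h.2.2 h.1).symm

end SimpleGraph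

theorem statement5_general {V : Type*} (Γ : SimpleGraph V) (t : List V)
    (ht : Γᶜ.IsClosedWalkList t) (x : Γ.racGroup)
    (hx : Γ.racCS.length x =
      Γ.racCS.length (x * Γ.racCS.simple (t.getLast ht.1)) + 1) :
    ∀ L : ℕ,
      Γ.racCS.length (x * (Γ.racCS.wordProd t) ^ L) =
        Γ.racCS.length x + t.length * L := by
  have hdesc : Γ.racCS.IsRightDescent x (t.getLast ht.1) :=
    Γ.racCS.isRightDescent_iff.mpr hx.symm
  exact fun L => (SimpleGraph.length_mul_wordProd_pow_of_isChain Γ.racCS ht.1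
    ht.isChain_getLast_cons hdesc L).1

/-- If `(t₁, …, tₙ)` is a closed walk in `Γᶜ`, `g := t₁ ⋯ tₙ ∈ W_Γ`, and
`x ∈ W_Γ` ends in `tₙ`, i.e. `ℓ(x tₙ) = ℓ(x) - 1`, then `ℓ(x gᴸ) = ℓ(x) + n L` for all
`L ∈ ℕ`. -/
theorem statement5 {V : Type*} [Fintype V] (Γ : SimpleGraph V) (t : List V)
    (ht : Γᶜ.IsClosedWalkList t) (x : Γ.racGroup)
    (hx : Γ.racCS.length x =
      Γ.racCS.length (x * Γ.racCS.simple (t.getLast ht.1)) + 1) :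
    ∀ L : ℕ,
      Γ.racCS.length (x * (Γ.racCS.wordProd t) ^ L) =
        Γ.racCS.length x + t.length * L :=
  statement5_general Γ t ht x hx
end
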